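/- Let d ≥ 1 be an integer, let q : (0,∞) × ℝ^d × ℝ^d → [0,∞) be measurable, let b : ℝ^d → [0,∞) be measurable, and let t > 0. Then for every n ≥ 1 and every x ∈ ℝ^d, the iterated integral over the ordered simplex ∫_{0 ≤ s₁ < s₂ < ⋯ < s_n ≤ t} ∫_{(ℝ^d)^n} b(y₁)⋯b(y_n) · q(s₁, x, y₁) · ∏_{j=2}^n q(s_j − s_{j−1}, y_{j−1}, y_j) dy₁⋯dy_n ds₁⋯ds_n is at most α_n · (√t · Λ_t(b))^n. -/

import Mathlib

/-!
Write `J_n(τ, x)` for the iterated integral with `t` replaced by `τ`. Splitting off the first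
time `s` and the first point `y` of the chain gives the renewal identity
`J_{n+1}(τ, x) = ∫_0^τ ∫ b(y) q(s, x, y) J_n(τ - s, y) dy ds`.
By induction, `J_n(τ, ·) ≤ α_n (√τ Λ_t(b))^n` for all `τ ≤ t`. In the induction step,
`√(τ - s)^n ≤ (α_{n+1} / α_n) √τ^(n+1) s^(-1/2)` by AM-GM, since
`max_{0 ≤ s ≤ τ} (τ - s)^n s = n^n τ^(n+1) / (n+1)^(n+1)`. What remains is
`∫_0^τ ∫ s^(-1/2) q(s, x, y) b(y) dy ds ≤ Λ_t(b)`.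
-/

open MeasureTheory Real Set
open scoped ENNReal

/-- The constants `α_n`, with `α_0 = α_1 = 1` and
`α_n = ∏_{k=2}^n (1 - 1/k)^{(k-1)/2} k^{-1/2}` for `n ≥ 2`. -/
noncomputable def alphaConst (n : ℕ) : ℝ :=
  ∏ k ∈ Finset.Icc 2 n, ((1 - 1 / (k : ℝ)) ^ (((k : ℝ) - 1) / 2) * (k : ℝ) ^ (-(1 : ℝ) / 2))

/-- `Λ_t(b) = sup_x ∫_0^t ∫ s^{-1/2} q(s,x,y) b(y) dy ds` (valued in `[0,∞]`). -/
noncomputable def lambdaQ (d : ℕ)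
    (q : ℝ → EuclideanSpace ℝ (Fin d) → EuclideanSpace ℝ (Fin d) → ℝ)
    (t : ℝ) (b : EuclideanSpace ℝ (Fin d) → ℝ) : ℝ≥0∞ :=
  ⨆ x : EuclideanSpace ℝ (Fin d), ∫⁻ s in Set.Ioc (0 : ℝ) t,
    ∫⁻ y, ENNReal.ofReal (s ^ (-(1 : ℝ) / 2) * q s x y * b y)

lemma pow_mul_le_one_of_mul_add_eq {x y : ℝ} (n : ℕ) (hx : 0 ≤ x) (hy : 0 ≤ y)
    (h : n * x + y = n + 1) : x ^ n * y ≤ 1 :=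
  calc x ^ n * y ≤ exp (x - 1) ^ n * exp (y - 1) := by
        gcongr <;> linarith [add_one_le_exp (x - 1), add_one_le_exp (y - 1)]
    _ = exp (n * (x - 1) + (y - 1)) := by rw [exp_add, exp_nat_mul]
    _ = 1 := by rw [show n * (x - 1) + (y - 1) = 0 by linarith, exp_zero]

lemma sub_pow_mul_le {s τ : ℝ} (n : ℕ) (hs : 0 ≤ s) (hsτ : s ≤ τ) :
    (τ - s) ^ n * s ≤ n ^ n / (n + 1) ^ (n + 1) * τ ^ (n + 1) := by
  rcases n.eq_zero_or_pos with rfl | hn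
  · simpa using hsτ
  obtain rfl | hτ := (hs.trans hsτ).eq_or_lt
  · simp [le_antisymm hsτ hs]
  have hn : (0 : ℝ) < n := by exact_mod_cast hn
  set x := (n + 1) * (τ - s) / (n * τ)
  set y := (n + 1) * s / τ
  have hxy : x ^ n * y ≤ 1 := pow_mul_le_one_of_mul_add_eq n (by positivity) (by positivity)
    (by simp only [x, y]; field_simp; ring)
  have hx : n * τ / (n + 1) * x = τ - s := by simp only [x]; field_simp
  have hy : τ / (n + 1) * y = s := by simp only [y]; field_simp
  calc (τ - s) ^ n * s = (n * τ / (n + 1)) ^ n * (τ / (n + 1)) * (x ^ n * y) := by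
        rw [← hx, ← hy, mul_pow]; ring
    _ ≤ (n * τ / (n + 1)) ^ n * (τ / (n + 1)) := mul_le_of_le_one_right (by positivity) hxy
    _ = n ^ n / (n + 1) ^ (n + 1) * τ ^ (n + 1) := by
        rw [div_pow, mul_pow, pow_succ, pow_succ]; field_simp

lemma sqrt_sub_pow_mul_sqrt_le {s τ : ℝ} (n : ℕ) (hs : 0 ≤ s) (hsτ : s ≤ τ) :
    √(τ - s) ^ n * √s ≤ √((n : ℝ) ^ n / ((n : ℝ) + 1) ^ (n + 1)) * √τ ^ (n + 1) := by
  rw [← pow_le_pow_iff_left₀ (by positivity) (by positivity) two_ne_zero, mul_pow, mul_pow,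
    ← pow_mul, ← pow_mul, mul_comm n, mul_comm (n + 1), pow_mul, pow_mul, sq_sqrt hs,
    sq_sqrt (by linarith), sq_sqrt (hs.trans hsτ), sq_sqrt (by positivity)]
  exact sub_pow_mul_le n hs hsτ

lemma ofReal_sqrt_sub_pow_le {s τ : ℝ} (n : ℕ) (hs : s ∈ Ioc 0 τ) :
    ENNReal.ofReal (√(τ - s)) ^ n ≤ ENNReal.ofReal (√((n : ℝ) ^ n / ((n : ℝ) + 1) ^ (n + 1))) *
      ENNReal.ofReal (√τ) ^ (n + 1) * ENNReal.ofReal (s ^ (-(1 : ℝ) / 2)) := by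
  have hrpow : s ^ (-(1 : ℝ) / 2) = (√s)⁻¹ := by rw [sqrt_eq_rpow, neg_div, rpow_neg hs.1.le]
  rw [← ENNReal.ofReal_pow (sqrt_nonneg _), ← ENNReal.ofReal_pow (sqrt_nonneg _),
    ← ENNReal.ofReal_mul (sqrt_nonneg _), ← ENNReal.ofReal_mul (by positivity), hrpow,
    ← div_eq_mul_inv]
  exact ENNReal.ofReal_le_ofReal
    ((le_div_iff₀ (sqrt_pos.2 hs.1)).2 (sqrt_sub_pow_mul_sqrt_le n hs.1.le hs.2))

lemma alphaConst_succ (n : ℕ) :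
    alphaConst (n + 1) = alphaConst n * √((n : ℝ) ^ n / ((n : ℝ) + 1) ^ (n + 1)) := by
  rcases n.eq_zero_or_pos with rfl | hn
  · simp [alphaConst]
  rw [alphaConst, Finset.prod_Icc_succ_top (by omega), ← alphaConst]
  congr 1
  push_cast
  have h1 : (1 : ℝ) - 1 / (n + 1) = n / (n + 1) := by field_simp; ring
  rw [h1, add_sub_cancel_right, sqrt_eq_rpow, div_rpow (by positivity) (by positivity),
    div_rpow (by positivity) (by positivity), ← rpow_natCast, ← rpow_natCast,
    ← rpow_mul (by positivity), ← rpow_mul (by positivity),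
    show ((n + 1 : ℕ) : ℝ) * (1 / 2) = n / 2 + 1 / 2 by push_cast; ring,
    rpow_add (by positivity), show (-1 : ℝ) / 2 = -(1 / 2) by norm_num, rpow_neg (by positivity),
    mul_one_div]
  field_simp

lemma lintegral_mul_le_alphaConst_succ_mul {α : Type*} [MeasurableSpace α] {μ : Measure α}
    {k J : α → ℝ≥0∞} (hk : Measurable k) {n : ℕ} {τ s₀ : ℝ} {Λ : ℝ≥0∞} (hs₀ : s₀ ∈ Ioc 0 τ)
    (hJ : ∀ y, J y ≤ ENNReal.ofReal (alphaConst n) * ENNReal.ofReal (√(τ - s₀)) ^ n * Λ ^ n) :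
    ∫⁻ y, k y * J y ∂μ ≤
      ENNReal.ofReal (alphaConst (n + 1)) * ENNReal.ofReal (√τ) ^ (n + 1) * Λ ^ n *
        (ENNReal.ofReal (s₀ ^ (-(1 : ℝ) / 2)) * ∫⁻ y, k y ∂μ) :=
  calc ∫⁻ y, k y * J y ∂μ
      ≤ ∫⁻ y, k y *
          (ENNReal.ofReal (alphaConst n) * ENNReal.ofReal (√(τ - s₀)) ^ n * Λ ^ n) ∂μ :=
        lintegral_mono fun y => by gcongr; exact hJ y
    _ = ENNReal.ofReal (alphaConst n) * Λ ^ n * ENNReal.ofReal (√(τ - s₀)) ^ n *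
          ∫⁻ y, k y ∂μ := by
        rw [lintegral_mul_const _ hk]
        ring
    _ ≤ ENNReal.ofReal (alphaConst n) * Λ ^ n *
          (ENNReal.ofReal (√((n : ℝ) ^ n / ((n : ℝ) + 1) ^ (n + 1))) *
            ENNReal.ofReal (√τ) ^ (n + 1) * ENNReal.ofReal (s₀ ^ (-(1 : ℝ) / 2))) *
          ∫⁻ y, k y ∂μ := by
        gcongr; exact ofReal_sqrt_sub_pow_le n hs₀
    _ = _ := by rw [alphaConst_succ, ENNReal.ofReal_mul' (sqrt_nonneg _)]; ring

@[fun_prop]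
lemma Measurable.fin_cons {β γ : Type*} [MeasurableSpace β] [MeasurableSpace γ] {n : ℕ}
    {f : γ → β} {g : γ → Fin n → β} (hf : Measurable f) (hg : Measurable g) :
    Measurable fun c => (Fin.cons (f c) (g c) : Fin (n + 1) → β) := by
  refine measurable_pi_iff.2 fun i => Fin.cases ?_ (fun j => ?_) i
  · simpa using hf
  · simpa using measurable_pi_iff.1 hg j

lemma lintegral_eq_lintegral_lintegral_cons {α : Type*} [MeasureSpace α]
    [SigmaFinite (volume : Measure α)] {n : ℕ} {G : (Fin (n + 1) → α) → ℝ≥0∞}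
    (hG : Measurable G) :
    ∫⁻ f, G f = ∫⁻ a, ∫⁻ g : Fin n → α, G (Fin.cons a g) := by
  let e := (MeasurableEquiv.piFinSuccAbove (fun _ : Fin (n + 1) => α) 0).symm
  have he : MeasurePreserving e := (volume_preserving_piFinSuccAbove _ 0).symm
  rw [← he.lintegral_comp hG, Measure.volume_eq_prod,
    lintegral_prod (fun z => G (e z)) (hG.comp he.measurable).aemeasurable]
  simp [e, Fin.insertNthEquiv, Fin.insertNth_zero']

/-- Open at `0`, unlike the simplex of the statement; this is the version that splits off the
first time `s₀ ∈ (0, τ]`, leaving a shifted simplex of length `τ - s₀`. -/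
def orderedSimplex (n : ℕ) (τ : ℝ) : Set (Fin n → ℝ) :=
  {s | StrictMono s ∧ ∀ i, s i ∈ Ioc 0 τ}

lemma measurableSet_orderedSimplex (n : ℕ) (τ : ℝ) : MeasurableSet (orderedSimplex n τ) := by
  simp only [orderedSimplex, StrictMono, ofPred_and, ofPred_forall]
  exact (MeasurableSet.iInter fun i => .iInter fun j => .iInter fun _ =>
    measurableSet_lt (measurable_pi_apply i) (measurable_pi_apply j)).inter
    (MeasurableSet.iInter fun i => measurableSet_Ioc.preimage (measurable_pi_apply i))

lemma setOf_strictMono_Icc_ae_eq_orderedSimplex (n : ℕ) (τ : ℝ) :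
    {s : Fin n → ℝ | StrictMono s ∧ ∀ i, s i ∈ Icc 0 τ} =ᵐ[volume] orderedSimplex n τ := by
  have hIcc : {s : Fin n → ℝ | StrictMono s ∧ ∀ i, s i ∈ Icc 0 τ} =
      {s | StrictMono s} ∩ Icc 0 fun _ => τ := by
    ext s; simp [Pi.le_def, forall_and]
  have hIoc : orderedSimplex n τ = {s | StrictMono s} ∩ univ.pi fun _ => Ioc 0 τ := by
    ext s; simp [orderedSimplex]
  rw [hIcc, hIoc, volume_pi]
  exact Filter.EventuallyEq.rfl.inter Measure.univ_pi_Ioc_ae_eq_Icc.symm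

lemma cons_add_mem_orderedSimplex_iff {n : ℕ} {τ s₀ : ℝ} {u : Fin n → ℝ} :
    (Fin.cons s₀ (fun i => u i + s₀) : Fin (n + 1) → ℝ) ∈ orderedSimplex (n + 1) τ ↔
      s₀ ∈ Ioc 0 τ ∧ u ∈ orderedSimplex n (τ - s₀) := by
  simp only [orderedSimplex, mem_ofPred_eq, Fin.strictMono_cons, Fin.forall_fin_succ,
    Fin.cons_zero, Fin.cons_succ, mem_Ioc, lt_add_iff_pos_left, le_sub_iff_add_le]
  simp only [StrictMono, add_lt_add_iff_right]
  constructor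
  · rintro ⟨⟨hpos, hmono⟩, hs₀, hu⟩
    exact ⟨hs₀, hmono, fun i => ⟨hpos i, (hu i).2⟩⟩
  · rintro ⟨hs₀, hmono, hu⟩
    exact ⟨⟨fun i => (hu i).1, hmono⟩, hs₀, fun i => ⟨by linarith [(hu i).1, hs₀.1], (hu i).2⟩⟩

lemma lintegral_orderedSimplex_succ {n : ℕ} {τ : ℝ} {G : (Fin (n + 1) → ℝ) → ℝ≥0∞}
    (hG : Measurable G) :
    ∫⁻ s in orderedSimplex (n + 1) τ, G s =
      ∫⁻ s₀ in Ioc 0 τ, ∫⁻ u in orderedSimplex n (τ - s₀), G (Fin.cons s₀ fun i => u i + s₀) := by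
  classical
  rw [← lintegral_indicator (measurableSet_orderedSimplex _ _),
    lintegral_eq_lintegral_lintegral_cons (hG.indicator (measurableSet_orderedSimplex _ _)),
    ← lintegral_indicator measurableSet_Ioc]
  refine lintegral_congr fun s₀ => ?_
  rw [← lintegral_add_right_eq_self _ fun _ => s₀]
  simp only [Pi.add_def]
  by_cases hs₀ : s₀ ∈ Ioc 0 τ
  · rw [indicator_of_mem hs₀, ← lintegral_indicator (measurableSet_orderedSimplex _ _)]
    simp only [indicator_apply, cons_add_mem_orderedSimplex_iff, hs₀, true_and]
  · have hout (u : Fin n → ℝ) : (Fin.cons s₀ fun i => u i + s₀) ∉ orderedSimplex (n + 1) τ :=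
      fun hu => hs₀ (cons_add_mem_orderedSimplex_iff.1 hu).1
    simp [hout, hs₀]

section Chain

variable {α : Type*}

/-- The integrand of the statement with `K s x y = b(y) q(s, x, y)`: a chain started at `x`,
jumping at the times `s` to the points `y`. -/
noncomputable def chainDensity (K : ℝ → α → α → ℝ≥0∞) (n : ℕ) (x : α) (s : Fin n → ℝ)
    (y : Fin n → α) : ℝ≥0∞ :=
  ∏ i : Fin n, K ((Fin.cons 0 s : Fin (n + 1) → ℝ) i.succ -
    (Fin.cons 0 s : Fin (n + 1) → ℝ) i.castSucc) ((Fin.cons x y : Fin (n + 1) → α) i.castSucc) (y i)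

noncomputable def chainIntegral [MeasureSpace α] (K : ℝ → α → α → ℝ≥0∞) (n : ℕ) (τ : ℝ)
    (x : α) : ℝ≥0∞ :=
  ∫⁻ s in orderedSimplex n τ, ∫⁻ y, chainDensity K n x s y

variable {K : ℝ → α → α → ℝ≥0∞}

lemma Measurable.chainDensity [MeasurableSpace α] {β : Type*} [MeasurableSpace β]
    (hK : Measurable fun p : ℝ × α × α => K p.1 p.2.1 p.2.2) {n : ℕ} {x : β → α}
    {s : β → Fin n → ℝ} {y : β → Fin n → α} (hx : Measurable x) (hs : Measurable s)
    (hy : Measurable y) : Measurable fun c => chainDensity K n (x c) (s c) (y c) :=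
  Finset.measurable_prod _ fun i _ => hK.comp (f := fun c =>
    ((Fin.cons 0 (s c) : Fin (n + 1) → ℝ) i.succ - (Fin.cons 0 (s c) : Fin (n + 1) → ℝ) i.castSucc,
      (Fin.cons (x c) (y c) : Fin (n + 1) → α) i.castSucc, y c i)) (by fun_prop)

lemma chainDensity_cons (n : ℕ) (x y₀ : α) (s₀ : ℝ) (u : Fin n → ℝ) (y : Fin n → α) :
    chainDensity K (n + 1) x (Fin.cons s₀ fun i => u i + s₀) (Fin.cons y₀ y) =
      K s₀ x y₀ * chainDensity K n y₀ u y := by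
  have hshift : (Fin.cons s₀ fun i => u i + s₀ : Fin (n + 1) → ℝ) =
      fun j => (Fin.cons 0 u : Fin (n + 1) → ℝ) j + s₀ := by
    funext j; cases j using Fin.cases <;> simp
  simp only [chainDensity, Fin.prod_univ_succ, ← Fin.succ_castSucc, Fin.cons_succ, Fin.cons_zero,
    Fin.castSucc_zero, hshift, zero_add, sub_zero, add_sub_add_right_eq_sub]

variable [MeasureSpace α] [SigmaFinite (volume : Measure α)]

lemma lintegral_chainDensity_succ (hK : Measurable fun p : ℝ × α × α => K p.1 p.2.1 p.2.2)
    (n : ℕ) (x : α) (s₀ : ℝ) (u : Fin n → ℝ) :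
    ∫⁻ y, chainDensity K (n + 1) x (Fin.cons s₀ fun i => u i + s₀) y =
      ∫⁻ y₀, K s₀ x y₀ * ∫⁻ y, chainDensity K n y₀ u y := by
  rw [lintegral_eq_lintegral_lintegral_cons (G := chainDensity K (n + 1) x _)
    (hK.chainDensity measurable_const measurable_const measurable_id)]
  refine lintegral_congr fun y₀ => ?_
  simp only [chainDensity_cons]
  exact lintegral_const_mul _ (hK.chainDensity measurable_const measurable_const measurable_id)

lemma chainIntegral_succ (hK : Measurable fun p : ℝ × α × α => K p.1 p.2.1 p.2.2)
    (n : ℕ) (τ : ℝ) (x : α) :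
    chainIntegral K (n + 1) τ x =
      ∫⁻ s₀ in Ioc 0 τ, ∫⁻ y₀, K s₀ x y₀ * chainIntegral K n (τ - s₀) y₀ := by
  have hF : Measurable fun p : α × (Fin n → ℝ) => ∫⁻ y, chainDensity K n p.1 p.2 y :=
    (hK.chainDensity (measurable_fst.comp measurable_fst) (measurable_snd.comp measurable_fst)
      measurable_snd).lintegral_prod_right'
  rw [chainIntegral, lintegral_orderedSimplex_succ
    (G := fun s => ∫⁻ y, chainDensity K (n + 1) x s y)
    (hK.chainDensity measurable_const measurable_fst measurable_snd).lintegral_prod_right]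
  refine lintegral_congr fun s₀ => ?_
  simp only [lintegral_chainDensity_succ hK]
  rw [lintegral_lintegral_swap]
  · exact lintegral_congr fun y₀ => lintegral_const_mul _ (hF.comp measurable_prodMk_left)
  · exact ((hK.comp (f := fun p : (Fin n → ℝ) × α => (s₀, x, p.2)) (by fun_prop)).mul
      (hF.comp measurable_swap)).aemeasurable

lemma chainIntegral_le (hK : Measurable fun p : ℝ × α × α => K p.1 p.2.1 p.2.2) {t : ℝ}
    {Λ : ℝ≥0∞}
    (hΛ : ∀ x, ∫⁻ s in Ioc 0 t, ENNReal.ofReal (s ^ (-(1 : ℝ) / 2)) * ∫⁻ y, K s x y ≤ Λ)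
    (n : ℕ) {τ : ℝ} (hτ : τ ≤ t) (x : α) :
    chainIntegral K n τ x ≤ ENNReal.ofReal (alphaConst n) * ENNReal.ofReal (√τ) ^ n * Λ ^ n := by
  induction n generalizing τ x with
  | zero =>
    simpa [chainIntegral, chainDensity, alphaConst, volume_pi] using
      measure_mono (μ := (volume : Measure (Fin 0 → ℝ))) (subset_univ (orderedSimplex 0 τ))
  | succ n ih =>
    have hKx (s : ℝ) (x : α) : Measurable (K s x) := hK.comp (f := fun y => (s, x, y)) (by fun_prop)
    have hKs : Measurable fun s => ENNReal.ofReal (s ^ (-(1 : ℝ) / 2)) * ∫⁻ y, K s x y :=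
      (by fun_prop : Measurable fun s : ℝ => ENNReal.ofReal (s ^ (-(1 : ℝ) / 2))).mul
        (hK.comp (f := fun p : ℝ × α => (p.1, x, p.2)) (by fun_prop)).lintegral_prod_right'
    set A := ENNReal.ofReal (alphaConst (n + 1)) * ENNReal.ofReal (√τ) ^ (n + 1) * Λ ^ n
    calc chainIntegral K (n + 1) τ x
        = ∫⁻ s₀ in Ioc 0 τ, ∫⁻ y, K s₀ x y * chainIntegral K n (τ - s₀) y :=
          chainIntegral_succ hK n τ x
      _ ≤ ∫⁻ s₀ in Ioc 0 τ, A * (ENNReal.ofReal (s₀ ^ (-(1 : ℝ) / 2)) * ∫⁻ y, K s₀ x y) :=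
          setLIntegral_mono' measurableSet_Ioc fun s₀ hs₀ =>
            lintegral_mul_le_alphaConst_succ_mul (hKx s₀ x) hs₀ fun y => ih (by linarith [hs₀.1]) y
      _ = A * ∫⁻ s₀ in Ioc 0 τ, ENNReal.ofReal (s₀ ^ (-(1 : ℝ) / 2)) * ∫⁻ y, K s₀ x y :=
          lintegral_const_mul A hKs
      _ ≤ A * Λ := by
          gcongr; exact (lintegral_mono_set (Ioc_subset_Ioc_right hτ)).trans (hΛ x)
      _ = ENNReal.ofReal (alphaConst (n + 1)) * ENNReal.ofReal (√τ) ^ (n + 1) * Λ ^ (n + 1) := by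
          simp only [A]; ring

end Chain

lemma setLIntegral_rpow_mul_lintegral_le_lambdaQ (d : ℕ)
    (q : ℝ → EuclideanSpace ℝ (Fin d) → EuclideanSpace ℝ (Fin d) → ℝ)
    (b : EuclideanSpace ℝ (Fin d) → ℝ) (t : ℝ) (x : EuclideanSpace ℝ (Fin d)) :
    ∫⁻ s in Ioc 0 t, ENNReal.ofReal (s ^ (-(1 : ℝ) / 2)) * ∫⁻ y, ENNReal.ofReal (b y * q s x y) ≤
      lambdaQ d q t b := by
  refine le_of_eq_of_le (setLIntegral_congr_fun measurableSet_Ioc fun s hs => ?_)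
    (le_iSup (fun x => ∫⁻ s in Ioc 0 t,
      ∫⁻ y, ENNReal.ofReal (s ^ (-(1 : ℝ) / 2) * q s x y * b y)) x)
  rw [← lintegral_const_mul' _ _ ENNReal.ofReal_ne_top]
  refine lintegral_congr fun y => ?_
  rw [← ENNReal.ofReal_mul (rpow_nonneg hs.1.le _)]
  ring_nf

theorem stmt1_general (d : ℕ)
    (q : ℝ → EuclideanSpace ℝ (Fin d) → EuclideanSpace ℝ (Fin d) → ℝ)
    (hqm : Measurable fun p : ℝ × EuclideanSpace ℝ (Fin d) × EuclideanSpace ℝ (Fin d) =>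
      q p.1 p.2.1 p.2.2)
    (b : EuclideanSpace ℝ (Fin d) → ℝ) (hbm : Measurable b)
    (t : ℝ) (n : ℕ) (x : EuclideanSpace ℝ (Fin d)) :
    (∫⁻ s in {s : Fin n → ℝ | StrictMono s ∧ ∀ i, s i ∈ Set.Icc 0 t},
        ∫⁻ y : Fin n → EuclideanSpace ℝ (Fin d),
          ∏ i : Fin n,
            ENNReal.ofReal (b (y i) *
              q ((Fin.cons 0 s : Fin (n + 1) → ℝ) i.succ
                  - (Fin.cons 0 s : Fin (n + 1) → ℝ) i.castSucc)
                ((Fin.cons x y : Fin (n + 1) → EuclideanSpace ℝ (Fin d)) i.castSucc) (y i)))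
      ≤ ENNReal.ofReal (alphaConst n) *
          (ENNReal.ofReal (Real.sqrt t) * lambdaQ d q t b) ^ n := by
  let K s x y := ENNReal.ofReal (b y * q s x y)
  have hK : Measurable fun p : ℝ × _ × _ => K p.1 p.2.1 p.2.2 :=
    ((hbm.comp (measurable_snd.comp measurable_snd)).mul hqm).ennreal_ofReal
  calc _ = chainIntegral K n t x :=
        setLIntegral_congr (setOf_strictMono_Icc_ae_eq_orderedSimplex n t)
    _ ≤ _ := chainIntegral_le hK (setLIntegral_rpow_mul_lintegral_le_lambdaQ d q b t) n le_rfl x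
    _ = _ := by rw [mul_pow, mul_assoc]

theorem stmt1 (d : ℕ) (hd : 1 ≤ d)
    (q : ℝ → EuclideanSpace ℝ (Fin d) → EuclideanSpace ℝ (Fin d) → ℝ)
    (hqm : Measurable fun p : ℝ × EuclideanSpace ℝ (Fin d) × EuclideanSpace ℝ (Fin d) =>
      q p.1 p.2.1 p.2.2)
    (hq0 : ∀ s x y, 0 ≤ q s x y)
    (b : EuclideanSpace ℝ (Fin d) → ℝ) (hbm : Measurable b) (hb0 : ∀ z, 0 ≤ b z)
    (t : ℝ) (ht : 0 < t) (n : ℕ) (hn : 1 ≤ n) (x : EuclideanSpace ℝ (Fin d)) :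
    (∫⁻ s in {s : Fin n → ℝ | StrictMono s ∧ ∀ i, s i ∈ Set.Icc 0 t},
        ∫⁻ y : Fin n → EuclideanSpace ℝ (Fin d),
          ∏ i : Fin n,
            ENNReal.ofReal (b (y i) *
              q ((Fin.cons 0 s : Fin (n + 1) → ℝ) i.succ
                  - (Fin.cons 0 s : Fin (n + 1) → ℝ) i.castSucc)
                ((Fin.cons x y : Fin (n + 1) → EuclideanSpace ℝ (Fin d)) i.castSucc) (y i)))
      ≤ ENNReal.ofReal (alphaConst n) *
          (ENNReal.ofReal (Real.sqrt t) * lambdaQ d q t b) ^ n :=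
  stmt1_general d q hqm b hbm t n x
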